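/- arXiv:math/0501299 — 12 statements merged into one kernel-verified Lean document; each statement's English description precedes it below -/
import Mathlib

section
/- For probability distributions P = (p_1,...,p_n) and Q = (q_1,...,q_n) with all p_i, q_i > 0 and ∑p_i = ∑q_i = 1, the J-divergence satisfies J(P||Q) = 4[I(P||Q) + T(P||Q)], where J(P||Q) = ∑(p_i - q_i)·ln(p_i/q_i), I(P||Q) = (1/2)∑[p_i·ln(2p_i/(p_i+q_i)) + q_i·ln(2q_i/(p_i+q_i))], and T(P||Q) = ∑((p_i+q_i)/2)·ln((p_i+q_i)/(2·√(p_i·q_i))). -/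
/-! Termwise, with `m = (a + b) / 2`, the Jensen–Shannon summand is `a log a + b log b - 2 m log m`
(up to the factor `1/2`) and the arithmetic–geometric summand is `m log m - m (log a + log b) / 2`;
the `m log m` terms cancel in `I + T`, leaving `(a - b)(log a - log b) / 4`. -/

namespace Real

variable {a b : ℝ}

lemma mul_log_two_mul_div_add_add (ha : 0 < a) (hb : 0 < b) :
    a * log (2 * a / (a + b)) + b * log (2 * b / (a + b)) =
      a * log a + b * log b - (a + b) * log ((a + b) / 2) := by
  have hm : 0 < (a + b) / 2 := by positivity
  have hdiv (x : ℝ) : 2 * x / (a + b) = x / ((a + b) / 2) := by field_simp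
  rw [hdiv, hdiv, log_div ha.ne' hm.ne', log_div hb.ne' hm.ne']
  ring

lemma add_div_two_mul_log_add_div_sqrt (ha : 0 < a) (hb : 0 < b) :
    (a + b) / 2 * log ((a + b) / (2 * √(a * b))) =
      (a + b) / 2 * (log ((a + b) / 2) - (log a + log b) / 2) := by
  rw [← div_div, log_div (by positivity) (by positivity), log_sqrt (by positivity),
    log_mul ha.ne' hb.ne']

lemma sub_mul_log_div_eq_four_mul (ha : 0 < a) (hb : 0 < b) :
    (a - b) * log (a / b) =
      4 * ((1 / 2) * (a * log (2 * a / (a + b)) + b * log (2 * b / (a + b))) +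
        (a + b) / 2 * log ((a + b) / (2 * √(a * b)))) := by
  rw [mul_log_two_mul_div_add_add ha hb, add_div_two_mul_log_add_div_sqrt ha hb,
    log_div ha.ne' hb.ne']
  ring

end Real

theorem J_eq_four_I_plus_T_general (n : ℕ) (p q : Fin n → ℝ)
    (hp : ∀ i, 0 < p i) (hq : ∀ i, 0 < q i) :
    (∑ i, (p i - q i) * Real.log (p i / q i)) =
      4 * ((1 / 2) * ∑ i, (p i * Real.log (2 * p i / (p i + q i)) +
              q i * Real.log (2 * q i / (p i + q i))) +
           ∑ i, ((p i + q i) / 2) *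
              Real.log ((p i + q i) / (2 * Real.sqrt (p i * q i)))) := by
  simp only [Real.sub_mul_log_div_eq_four_mul (hp _) (hq _), ← Finset.mul_sum,
    Finset.sum_add_distrib]

theorem J_eq_four_I_plus_T (n : ℕ) (hn : 2 ≤ n) (p q : Fin n → ℝ)
    (hp : ∀ i, 0 < p i) (hq : ∀ i, 0 < q i)
    (hps : ∑ i, p i = 1) (hqs : ∑ i, q i = 1) :
    (∑ i, (p i - q i) * Real.log (p i / q i)) =
      4 * ((1 / 2) * ∑ i, (p i * Real.log (2 * p i / (p i + q i)) +
              q i * Real.log (2 * q i / (p i + q i))) +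
           ∑ i, ((p i + q i) / 2) *
              Real.log ((p i + q i) / (2 * Real.sqrt (p i * q i)))) :=
  J_eq_four_I_plus_T_general n p q hp hq
end

section
/- Fix s ≥ −1 real. The function ψ_s : (0,∞) → ℝ defined for s ≠ 0,1 by ψ_s(x) = [s(s−1)]^{-1}[x((x+1)/(2x))^s − x − s(1−x)/2], for s = 0 by ψ_0(x) = (1−x)/2 − x·ln((x+1)/(2x)), and for s = 1 by ψ_1(x) = (x−1)/2 + ((x+1)/2)·ln((x+1)/(2x)), has second derivative ψ_s''(x) = (1/(4x³))·((x+1)/(2x))^{s−2} > 0 for all x > 0; hence ψ_s is strictly convex on (0,∞) and ψ_s(1) = 0. -/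
noncomputable def psi (s : ℝ) : ℝ → ℝ := fun x =>
  if s = 0 then (1 - x) / 2 - x * Real.log ((x + 1) / (2 * x))
  else if s = 1 then (x - 1) / 2 + ((x + 1) / 2) * Real.log ((x + 1) / (2 * x))
  else (s * (s - 1))⁻¹ * (x * ((x + 1) / (2 * x)) ^ s - x - s * ((1 - x) / 2))

noncomputable def psiD (s : ℝ) : ℝ → ℝ := fun x =>
  if s = 0 then -(1/2) - Real.log ((x + 1) / (2 * x)) + 1 / (x + 1)
  else if s = 1 then 1/2 + (1/2) * Real.log ((x + 1) / (2 * x)) - 1 / (2 * x)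
  else (s * (s - 1))⁻¹ *
    (((x + 1) / (2 * x)) ^ s - s / (2 * x) * ((x + 1) / (2 * x)) ^ (s - 1) - 1 + s / 2)

lemma hasDerivAt_u (x : ℝ) (hx : 0 < x) :
    HasDerivAt (fun y : ℝ => (y + 1) / (2 * y)) (-(1 / (2 * x ^ 2))) x := by
  have h1 : HasDerivAt (fun y : ℝ => y + 1) 1 x := (hasDerivAt_id x).add_const 1
  have h2 : HasDerivAt (fun y : ℝ => 2 * y) (2 * 1) x := (hasDerivAt_id x).const_mul 2
  exact (h1.div h2 (by positivity)).congr_deriv (by field_simp; ring)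

lemma u_pos (x : ℝ) (hx : 0 < x) : 0 < (x + 1) / (2 * x) :=
  div_pos (by linarith) (by linarith)

lemma hasDerivAt_psi (s x : ℝ) (hx : 0 < x) : HasDerivAt (psi s) (psiD s x) x := by
  have hu := hasDerivAt_u x hx
  have hup := u_pos x hx
  have hune : (x + 1) / (2 * x) ≠ 0 := ne_of_gt hup
  have hxne : x ≠ 0 := ne_of_gt hx
  have hx1 : x + 1 ≠ 0 := by positivity
  rcases eq_or_ne s 0 with h0 | h0
  · subst h0
    have hfun : psi 0 = fun x => (1 - x) / 2 - x * Real.log ((x + 1) / (2 * x)) := by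
      funext y; simp [psi]
    have hval : psiD 0 x = -(1/2) - Real.log ((x + 1) / (2 * x)) + 1 / (x + 1) := by
      simp [psiD]
    rw [hfun, hval]
    have hlog : HasDerivAt (fun y : ℝ => Real.log ((y + 1) / (2 * y)))
        (-(1 / (2 * x ^ 2)) / ((x + 1) / (2 * x))) x := hu.log hune
    have h1 : HasDerivAt (fun y : ℝ => (1 - y) / 2) (-(1/2)) x := by
      exact (((hasDerivAt_id x).const_sub 1).div_const 2).congr_deriv (by norm_num)
    have h2 : HasDerivAt (fun y : ℝ => y * Real.log ((y + 1) / (2 * y)))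
        (1 * Real.log ((x + 1) / (2 * x)) + x * (-(1 / (2 * x ^ 2)) / ((x + 1) / (2 * x)))) x :=
      (hasDerivAt_id x).mul hlog
    exact (h1.sub h2).congr_deriv (by field_simp; ring)
  rcases eq_or_ne s 1 with h1 | h1
  · subst h1
    have hfun : psi 1 = fun x => (x - 1) / 2 + ((x + 1) / 2) * Real.log ((x + 1) / (2 * x)) := by
      funext y; simp [psi]
    have hval : psiD 1 x = 1/2 + (1/2) * Real.log ((x + 1) / (2 * x)) - 1 / (2 * x) := by
      simp [psiD]
    rw [hfun, hval]
    have hlog : HasDerivAt (fun y : ℝ => Real.log ((y + 1) / (2 * y)))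
        (-(1 / (2 * x ^ 2)) / ((x + 1) / (2 * x))) x := hu.log hune
    have ha : HasDerivAt (fun y : ℝ => (y - 1) / 2) (1/2) x := by
      exact (((hasDerivAt_id x).sub_const 1).div_const 2).congr_deriv (by norm_num)
    have hb : HasDerivAt (fun y : ℝ => (y + 1) / 2) (1/2) x := by
      exact (((hasDerivAt_id x).add_const 1).div_const 2).congr_deriv (by norm_num)
    have hc : HasDerivAt (fun y : ℝ => ((y + 1) / 2) * Real.log ((y + 1) / (2 * y)))
        ((1/2) * Real.log ((x + 1) / (2 * x)) +
          ((x + 1) / 2) * (-(1 / (2 * x ^ 2)) / ((x + 1) / (2 * x)))) x := hb.mul hlog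
    exact (ha.add hc).congr_deriv (by field_simp; ring)
  · have hfun : psi s =
        fun x => (s * (s - 1))⁻¹ * (x * ((x + 1) / (2 * x)) ^ s - x - s * ((1 - x) / 2)) := by
      funext y; simp [psi, h0, h1]
    have hval : psiD s x = (s * (s - 1))⁻¹ *
        (((x + 1) / (2 * x)) ^ s - s / (2 * x) * ((x + 1) / (2 * x)) ^ (s - 1) - 1 + s / 2) := by
      simp [psiD, h0, h1]
    rw [hfun, hval]
    have hrs : HasDerivAt (fun y : ℝ => ((y + 1) / (2 * y)) ^ s)
        (-(1 / (2 * x ^ 2)) * s * ((x + 1) / (2 * x)) ^ (s - 1)) x :=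
      hu.rpow_const (Or.inl hune)
    have hA : HasDerivAt (fun y : ℝ => y * ((y + 1) / (2 * y)) ^ s)
        (1 * ((x + 1) / (2 * x)) ^ s +
          x * (-(1 / (2 * x ^ 2)) * s * ((x + 1) / (2 * x)) ^ (s - 1))) x :=
      (hasDerivAt_id x).mul hrs
    have hB : HasDerivAt (fun y : ℝ => s * ((1 - y) / 2)) (s * (-(1/2))) x := by
      have h' : HasDerivAt (fun y : ℝ => (1 - y) / 2) (-(1/2)) x := by
        exact (((hasDerivAt_id x).const_sub 1).div_const 2).congr_deriv (by norm_num)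
      exact h'.const_mul s
    have h := ((hA.sub (hasDerivAt_id x)).sub hB).const_mul (s * (s - 1))⁻¹
    refine h.congr_deriv ?_
    have hss : s * (s - 1) ≠ 0 := mul_ne_zero h0 (sub_ne_zero.mpr h1)
    generalize ((x + 1) / (2 * x) : ℝ) ^ s = A
    generalize ((x + 1) / (2 * x) : ℝ) ^ (s - 1) = B
    field_simp
    ring

lemma hasDerivAt_psiD (s x : ℝ) (hx : 0 < x) :
    HasDerivAt (psiD s) ((1 / (4 * x ^ 3)) * ((x + 1) / (2 * x)) ^ (s - 2)) x := by
  have hu := hasDerivAt_u x hx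
  have hup := u_pos x hx
  have hune : (x + 1) / (2 * x) ≠ 0 := ne_of_gt hup
  have hxne : x ≠ 0 := ne_of_gt hx
  have hx1 : x + 1 ≠ 0 := by positivity
  rcases eq_or_ne s 0 with h0 | h0
  · subst h0
    have hfun : psiD 0 = fun x => -(1/2) - Real.log ((x + 1) / (2 * x)) + 1 / (x + 1) := by
      funext y; simp [psiD]
    rw [hfun]
    have hlog : HasDerivAt (fun y : ℝ => Real.log ((y + 1) / (2 * y)))
        (-(1 / (2 * x ^ 2)) / ((x + 1) / (2 * x))) x := hu.log hune
    have hinv : HasDerivAt (fun y : ℝ => 1 / (y + 1)) (-1 / (x + 1) ^ 2) x := by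
      have h' := ((hasDerivAt_id x).add_const 1).inv hx1
      simpa only [one_div, id_eq, Pi.inv_def] using h'
    refine (((hasDerivAt_const x (-(1/2))).sub hlog).add hinv).congr_deriv ?_
    rw [show (0:ℝ) - 2 = -((2:ℕ):ℝ) by norm_num, Real.rpow_neg hup.le, Real.rpow_natCast]
    field_simp
    ring
  rcases eq_or_ne s 1 with h1 | h1
  · subst h1
    have hfun : psiD 1 = fun x => 1/2 + (1/2) * Real.log ((x + 1) / (2 * x)) - 1 / (2 * x) := by
      funext y; simp [psiD]
    rw [hfun]
    have hlog : HasDerivAt (fun y : ℝ => (1/2) * Real.log ((y + 1) / (2 * y)))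
        ((1/2) * (-(1 / (2 * x ^ 2)) / ((x + 1) / (2 * x)))) x := (hu.log hune).const_mul _
    have hinv : HasDerivAt (fun y : ℝ => 1 / (2 * y)) (-(1 / (2 * x ^ 2))) x := by
      have h2 : HasDerivAt (fun y : ℝ => 2 * y) (2 * 1) x := (hasDerivAt_id x).const_mul 2
      have h' := h2.inv (by positivity)
      have h'' : HasDerivAt (fun y : ℝ => (2 * y)⁻¹) (-(1 / (2 * x ^ 2))) x :=
        h'.congr_deriv (by field_simp)
      simpa [one_div] using h''
    refine (((hasDerivAt_const x ((1:ℝ)/2)).add hlog).sub hinv).congr_deriv ?_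
    rw [show (1:ℝ) - 2 = -((1:ℕ):ℝ) by norm_num, Real.rpow_neg hup.le, Real.rpow_natCast]
    field_simp
    ring
  · have hfun : psiD s = fun x => (s * (s - 1))⁻¹ *
        (((x + 1) / (2 * x)) ^ s - s / (2 * x) * ((x + 1) / (2 * x)) ^ (s - 1) - 1 + s / 2) := by
      funext y; simp [psiD, h0, h1]
    rw [hfun]
    have hrs : HasDerivAt (fun y : ℝ => ((y + 1) / (2 * y)) ^ s)
        (-(1 / (2 * x ^ 2)) * s * ((x + 1) / (2 * x)) ^ (s - 1)) x :=
      hu.rpow_const (Or.inl hune)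
    have hrs1 : HasDerivAt (fun y : ℝ => ((y + 1) / (2 * y)) ^ (s - 1))
        (-(1 / (2 * x ^ 2)) * (s - 1) * ((x + 1) / (2 * x)) ^ (s - 2)) x := by
      have h' := hu.rpow_const (p := s - 1) (Or.inl hune)
      rwa [show s - 1 - 1 = s - 2 by ring] at h'
    have hq : HasDerivAt (fun y : ℝ => s / (2 * y)) (-(s / (2 * x ^ 2))) x := by
      have h2 : HasDerivAt (fun y : ℝ => 2 * y) (2 * 1) x := (hasDerivAt_id x).const_mul 2
      exact ((hasDerivAt_const x s).div h2 (by positivity)).congr_deriv (by field_simp; ring)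
    have hprod := hq.mul hrs1
    have h := (((hrs.sub hprod).sub (hasDerivAt_const x 1)).add
        (hasDerivAt_const x (s / 2))).const_mul (s * (s - 1))⁻¹
    refine h.congr_deriv ?_
    have hss : s * (s - 1) ≠ 0 := mul_ne_zero h0 (sub_ne_zero.mpr h1)
    generalize ((x + 1) / (2 * x) : ℝ) ^ s = A
    generalize ((x + 1) / (2 * x) : ℝ) ^ (s - 1) = B
    generalize ((x + 1) / (2 * x) : ℝ) ^ (s - 2) = C
    field_simp
    ring

theorem psi_second_deriv_pos_convex (s : ℝ) (hs : -1 ≤ s) :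
    (∀ x : ℝ, 0 < x →
      deriv (deriv (psi s)) x = (1 / (4 * x ^ 3)) * ((x + 1) / (2 * x)) ^ (s - 2) ∧
      0 < (1 / (4 * x ^ 3)) * ((x + 1) / (2 * x)) ^ (s - 2)) ∧
    StrictConvexOn ℝ (Set.Ioi (0 : ℝ)) (psi s) ∧ psi s 1 = 0 := by
  have key : ∀ x : ℝ, 0 < x →
      deriv (deriv (psi s)) x = (1 / (4 * x ^ 3)) * ((x + 1) / (2 * x)) ^ (s - 2) := by
    intro x hx
    have hev : deriv (psi s) =ᶠ[nhds x] psiD s := by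
      filter_upwards [Ioi_mem_nhds hx] with y hy
      exact (hasDerivAt_psi s y hy).deriv
    rw [hev.deriv_eq]
    exact (hasDerivAt_psiD s x hx).deriv
  have hpos : ∀ x : ℝ, 0 < x → 0 < (1 / (4 * x ^ 3)) * ((x + 1) / (2 * x)) ^ (s - 2) := by
    intro x hx
    exact mul_pos (by positivity) (Real.rpow_pos_of_pos (u_pos x hx) _)
  refine ⟨fun x hx => ⟨key x hx, hpos x hx⟩, ?_, ?_⟩
  · apply strictConvexOn_of_deriv2_pos (convex_Ioi 0)
    · intro x hx
      exact (hasDerivAt_psi s x hx).differentiableAt.continuousAt.continuousWithinAt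
    · intro x hx
      rw [interior_Ioi] at hx
      have h2 : deriv^[2] (psi s) x = deriv (deriv (psi s)) x := by
        rw [Function.iterate_succ, Function.iterate_one]; rfl
      rw [h2, key x hx]
      exact hpos x hx
  · rcases eq_or_ne s 0 with h0 | h0
    · subst h0; simp [psi]
    rcases eq_or_ne s 1 with h1 | h1
    · subst h1; simp [psi]
    · simp [psi, h0, h1]
end

section
/- For any real s and any x > 0, the function ψ_s(x) = [s(s−1)]^{-1}[x((x+1)/(2x))^s − x − s(1−x)/2] (with the limiting values at s = 0 and s = 1) satisfies ψ_s(x) ≥ 0, with equality iff x = 1. Consequently, for probability distributions P, Q ∈ Γ_n, the divergence Ω_s(P||Q) = ∑ q_i ψ_s(p_i/q_i) is nonnegative and equals 0 iff P = Q. -/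
lemma aux_log1 {t : ℝ} (ht : 0 < t) (ht1 : t ≠ 1) : 0 < t - 1 - Real.log t := by
  have := Real.log_lt_sub_one_of_pos ht ht1
  linarith

lemma aux_log2 {t : ℝ} (ht : 0 < t) (ht1 : t ≠ 1) : 0 < t * Real.log t - t + 1 := by
  have hti : (0:ℝ) < t⁻¹ := inv_pos.mpr ht
  have hti1 : t⁻¹ ≠ 1 := by
    intro h; exact ht1 (by rw [← inv_inv t, h, inv_one])
  have h := aux_log1 hti hti1
  rw [Real.log_inv] at h
  have h2 : 0 < t * (t⁻¹ - 1 - -Real.log t) := mul_pos ht h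
  have h3 : t * t⁻¹ = 1 := mul_inv_cancel₀ ht.ne'
  nlinarith [h2, h3]

lemma aux_core {s t : ℝ} (hs0 : s ≠ 0) (hs1 : s ≠ 1) (ht : 0 < t) (ht1 : t ≠ 1) :
    0 < (s * (s - 1))⁻¹ * (t ^ s - 1 - s * (t - 1)) := by
  rcases lt_trichotomy s 0 with hneg | h0 | hpos
  · -- s < 0 : t^s = exp (s log t) > 1 + s log t ≥ 1 + s (t-1)
    have hlog : Real.log t ≤ t - 1 := Real.log_le_sub_one_of_pos ht
    have hlne : s * Real.log t ≠ 0 := by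
      refine mul_ne_zero hs0 ?_
      exact Real.log_ne_zero_of_pos_of_ne_one ht ht1
    have hexp : s * Real.log t + 1 < Real.exp (s * Real.log t) := Real.add_one_lt_exp hlne
    have hrw : t ^ s = Real.exp (s * Real.log t) := by
      rw [Real.rpow_def_of_pos ht, mul_comm]
    have hmul : s * (t - 1) ≤ s * Real.log t := mul_le_mul_of_nonpos_left hlog hneg.le
    have hkey : 0 < t ^ s - 1 - s * (t - 1) := by rw [hrw]; linarith
    have hinv : 0 < (s * (s - 1))⁻¹ := by
      apply inv_pos.mpr; nlinarith
    exact mul_pos hinv hkey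
  · exact absurd h0 hs0
  · rcases lt_trichotomy s 1 with hlt | h1 | hgt
    · -- 0 < s < 1 : t^s < 1 + s(t-1)
      have hb : ((1:ℝ) + (t - 1)) ^ s < 1 + s * (t - 1) :=
        rpow_one_add_lt_one_add_mul_self (by linarith) (by
          intro h; exact ht1 (by linarith)) hpos hlt
      have hb' : t ^ s < 1 + s * (t - 1) := by
        have : (1:ℝ) + (t - 1) = t := by ring
        rwa [this] at hb
      have hkey : t ^ s - 1 - s * (t - 1) < 0 := by linarith
      have hinv : (s * (s - 1))⁻¹ < 0 := by
        exact inv_neg''.mpr (by nlinarith)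
      exact mul_pos_of_neg_of_neg hinv hkey
    · exact absurd h1 hs1
    · -- 1 < s : 1 + s(t-1) < t^s
      have hb : (1:ℝ) + s * (t - 1) < (1 + (t - 1)) ^ s :=
        one_add_mul_self_lt_rpow_one_add (by linarith) (by
          intro h; exact ht1 (by linarith)) hgt
      have hb' : (1:ℝ) + s * (t - 1) < t ^ s := by
        have : (1:ℝ) + (t - 1) = t := by ring
        rwa [this] at hb
      have hkey : 0 < t ^ s - 1 - s * (t - 1) := by linarith
      have hinv : 0 < (s * (s - 1))⁻¹ := by
        apply inv_pos.mpr; nlinarith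
      exact mul_pos hinv hkey

lemma psi_pos {s x : ℝ} (hx : 0 < x) (hx1 : x ≠ 1) : 0 < psi s x := by
  set t : ℝ := (x + 1) / (2 * x) with htdef
  have hxne : x ≠ 0 := hx.ne'
  have ht : 0 < t := by positivity
  have ht1 : t ≠ 1 := by
    rw [htdef]
    intro h
    rw [div_eq_one_iff_eq (by positivity)] at h
    exact hx1 (by linarith)
  have hmt : x * (t - 1) = (1 - x) / 2 := by
    rw [htdef]; field_simp; ring
  have hmt2 : x * t = (x + 1) / 2 := by
    rw [htdef]; field_simp
  unfold psi
  by_cases hs0 : s = 0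
  · simp only [hs0, if_pos rfl]
    have : (1 - x) / 2 - x * Real.log t = x * (t - 1 - Real.log t) := by
      rw [← hmt]; ring
    rw [this]
    exact mul_pos hx (aux_log1 ht ht1)
  · by_cases hs1 : s = 1
    · simp only [hs0, hs1, if_neg, if_pos rfl, one_ne_zero, not_false_iff]
      have : (x - 1) / 2 + (x + 1) / 2 * Real.log t
          = x * (t * Real.log t - t + 1) := by
        rw [← hmt2]
        have : (x - 1) / 2 = -(x * (t - 1)) := by rw [hmt]; ring
        rw [this]; ring
      rw [this]
      exact mul_pos hx (aux_log2 ht ht1)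
    · simp only [hs0, hs1, if_neg, not_false_iff]
      have : x * t ^ s - x - s * ((1 - x) / 2) = x * (t ^ s - 1 - s * (t - 1)) := by
        rw [← hmt]; ring
      have hc := aux_core hs0 hs1 ht ht1
      calc (0:ℝ) < x * ((s * (s - 1))⁻¹ * (t ^ s - 1 - s * (t - 1))) := mul_pos hx hc
        _ = (s * (s - 1))⁻¹ * (x * t ^ s - x - s * ((1 - x) / 2)) := by rw [← hmt]; ring

lemma psi_one (s : ℝ) : psi s 1 = 0 := by
  unfold psi
  norm_num

theorem psi_nonneg_and_omega_nonneg (s : ℝ) :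
    (∀ x : ℝ, 0 < x → (0 ≤ psi s x ∧ (psi s x = 0 ↔ x = 1))) ∧
    (∀ (n : ℕ), 2 ≤ n → ∀ p q : Fin n → ℝ,
      (∀ i, 0 < p i) → (∀ i, 0 < q i) →
      (∑ i, p i = 1) → (∑ i, q i = 1) →
      0 ≤ (∑ i, q i * psi s (p i / q i)) ∧
      ((∑ i, q i * psi s (p i / q i)) = 0 ↔ p = q)) := by
  have hmain : ∀ x : ℝ, 0 < x → (0 ≤ psi s x ∧ (psi s x = 0 ↔ x = 1)) := by
    intro x hx
    by_cases hx1 : x = 1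
    · subst hx1; simp [psi_one]
    · have h := psi_pos (s := s) hx hx1
      refine ⟨h.le, ?_, ?_⟩
      · intro h0; exact absurd h0 (by linarith)
      · intro h1; exact absurd h1 hx1
  refine ⟨hmain, ?_⟩
  intro n _ p q hp hq _ _
  have hterm : ∀ i : Fin n, 0 ≤ q i * psi s (p i / q i) := by
    intro i
    exact mul_nonneg (hq i).le (hmain _ (div_pos (hp i) (hq i))).1
  refine ⟨Finset.sum_nonneg fun i _ => hterm i, ?_⟩
  constructor
  · intro hsum
    have hzero := (Finset.sum_eq_zero_iff_of_nonneg fun i _ => hterm i).mp hsum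
    funext i
    have hi := hzero i (Finset.mem_univ i)
    have hpsi : psi s (p i / q i) = 0 := by
      rcases mul_eq_zero.mp hi with h | h
      · exact absurd h (hq i).ne'
      · exact h
    have := ((hmain _ (div_pos (hp i) (hq i))).2).mp hpsi
    exact (div_eq_one_iff_eq (hq i).ne').mp this
  · intro hpq
    subst hpq
    apply Finset.sum_eq_zero
    intro i _
    rw [div_self (hq i).ne', psi_one, mul_zero]
end

section
/- (Dragomir) Let f : (0,∞) → ℝ be differentiable and convex with f(1) = 0. Then for any P, Q ∈ Γ_n, C_f(P||Q) = ∑ q_i f(p_i/q_i) satisfies 0 ≤ C_f(P||Q) ≤ ∑_{i=1}^n (p_i − q_i)·f'(p_i/q_i). -/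
/-!
Both bounds come from convexity of `f` alone. Since the weights `q i` sum to one and
`∑ q i * (p i / q i) = ∑ p i = 1`, Jensen's inequality gives `C_f(P‖Q) ≥ f 1 = 0`. For the upper
bound, the tangent line of `f` at `x = p i / q i` lies below the graph at `1`, so
`f x ≤ (x - 1) f'(x)`; multiplying by `q i` and summing gives the claim.
-/

open Finset

lemma ConvexOn.add_deriv_mul_sub_le {S : Set ℝ} {f : ℝ → ℝ} {x y : ℝ} (hfc : ConvexOn ℝ S f)
    (hx : x ∈ S) (hy : y ∈ S) (hfd : DifferentiableAt ℝ f x) :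
    f x + deriv f x * (y - x) ≤ f y := by
  rcases lt_trichotomy x y with hxy | rfl | hxy
  · have hslope := hfc.deriv_le_slope hx hy hxy hfd
    rw [slope_def_field, le_div_iff₀ (sub_pos.2 hxy)] at hslope
    linarith
  · simp
  · have hslope := hfc.slope_le_deriv hy hx hxy hfd
    rw [slope_def_field, div_le_iff₀ (sub_pos.2 hxy)] at hslope
    linarith

lemma ConvexOn.le_sub_one_mul_deriv {S : Set ℝ} {f : ℝ → ℝ} {x : ℝ} (hfc : ConvexOn ℝ S f)
    (hx : x ∈ S) (h1 : (1 : ℝ) ∈ S) (hf1 : f 1 = 0) (hfd : DifferentiableAt ℝ f x) :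
    f x ≤ (x - 1) * deriv f x := by
  have := hfc.add_deriv_mul_sub_le hx h1 hfd
  linarith

noncomputable def csiszarDivergence {ι : Type*} [Fintype ι] (f : ℝ → ℝ) (p q : ι → ℝ) : ℝ :=
  ∑ i, q i * f (p i / q i)

section CsiszarDivergence

variable {ι : Type*} [Fintype ι] {f : ℝ → ℝ} {p q : ι → ℝ}

lemma csiszarDivergence_nonneg (hfc : ConvexOn ℝ (Set.Ioi 0) f) (hf1 : f 1 = 0)
    (hp : ∀ i, 0 < p i) (hq : ∀ i, 0 < q i) (hps : ∑ i, p i = 1) (hqs : ∑ i, q i = 1) :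
    0 ≤ csiszarDivergence f p q := by
  have hmean : ∑ i, q i • (p i / q i) = 1 := by
    rw [← hps]
    exact sum_congr rfl fun i _ => by rw [smul_eq_mul, mul_div_cancel₀ _ (hq i).ne']
  have hjensen := hfc.map_sum_le (t := univ) (fun i _ => (hq i).le) hqs
    (fun i _ => Set.mem_Ioi.2 (div_pos (hp i) (hq i)))
  rw [hmean, hf1] at hjensen
  simpa [csiszarDivergence] using hjensen

lemma csiszarDivergence_le_sum_sub_mul_deriv (hfc : ConvexOn ℝ (Set.Ioi 0) f)
    (hfd : ∀ x : ℝ, 0 < x → DifferentiableAt ℝ f x) (hf1 : f 1 = 0)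
    (hp : ∀ i, 0 < p i) (hq : ∀ i, 0 < q i) :
    csiszarDivergence f p q ≤ ∑ i, (p i - q i) * deriv f (p i / q i) := by
  refine sum_le_sum fun i _ => ?_
  have hx : 0 < p i / q i := div_pos (hp i) (hq i)
  calc q i * f (p i / q i) ≤ q i * ((p i / q i - 1) * deriv f (p i / q i)) :=
        mul_le_mul_of_nonneg_left
          (hfc.le_sub_one_mul_deriv hx (Set.mem_Ioi.2 one_pos) hf1 (hfd _ hx)) (hq i).le
    _ = (p i - q i) * deriv f (p i / q i) := by
        field_simp [(hq i).ne']

end CsiszarDivergence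

theorem dragomir_bounds_general (f : ℝ → ℝ)
    (hconv : ConvexOn ℝ (Set.Ioi (0 : ℝ)) f)
    (hdiff : ∀ x : ℝ, 0 < x → DifferentiableAt ℝ f x) (hf1 : f 1 = 0)
    (n : ℕ) (p q : Fin n → ℝ)
    (hp : ∀ i, 0 < p i) (hq : ∀ i, 0 < q i)
    (hps : ∑ i, p i = 1) (hqs : ∑ i, q i = 1) :
    0 ≤ ∑ i, q i * f (p i / q i) ∧
    (∑ i, q i * f (p i / q i)) ≤ ∑ i, (p i - q i) * deriv f (p i / q i) :=
  ⟨csiszarDivergence_nonneg hconv hf1 hp hq hps hqs,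
    csiszarDivergence_le_sum_sub_mul_deriv hconv hdiff hf1 hp hq⟩

theorem dragomir_bounds (f : ℝ → ℝ)
    (hconv : ConvexOn ℝ (Set.Ioi (0 : ℝ)) f)
    (hdiff : ∀ x : ℝ, 0 < x → DifferentiableAt ℝ f x) (hf1 : f 1 = 0)
    (n : ℕ) (hn : 2 ≤ n) (p q : Fin n → ℝ)
    (hp : ∀ i, 0 < p i) (hq : ∀ i, 0 < q i)
    (hps : ∑ i, p i = 1) (hqs : ∑ i, q i = 1) :
    0 ≤ ∑ i, q i * f (p i / q i) ∧
    (∑ i, q i * f (p i / q i)) ≤ ∑ i, (p i - q i) * deriv f (p i / q i) :=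
  dragomir_bounds_general f hconv hdiff hf1 n p q hp hq hps hqs
end

section
/- Let f : (0,∞) → ℝ be differentiable and convex with f(1) = 0, and let P, Q ∈ Γ_n satisfy 0 < r ≤ p_i/q_i ≤ R < ∞ for all i, with 0 < r ≤ 1 ≤ R and r ≠ R. Then C_f(P||Q) ≤ [(R−1)f(r) + (1−r)f(R)]/(R − r). -/
theorem csiszar_secant_bound (f : ℝ → ℝ)
    (hconv : ConvexOn ℝ (Set.Ioi (0 : ℝ)) f)
    (hdiff : ∀ x : ℝ, 0 < x → DifferentiableAt ℝ f x) (hf1 : f 1 = 0)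
    (n : ℕ) (hn : 2 ≤ n) (p q : Fin n → ℝ)
    (hp : ∀ i, 0 < p i) (hq : ∀ i, 0 < q i)
    (hps : ∑ i, p i = 1) (hqs : ∑ i, q i = 1)
    (r R : ℝ) (hr : 0 < r) (hr1 : r ≤ 1) (h1R : 1 ≤ R) (hrR : r ≠ R)
    (hbound : ∀ i, r ≤ p i / q i ∧ p i / q i ≤ R) :
    (∑ i, q i * f (p i / q i)) ≤ ((R - 1) * f r + (1 - r) * f R) / (R - r) := by
  have hlt : r < R := lt_of_le_of_ne (hr1.trans h1R) hrR
  have hden : (0 : ℝ) < R - r := by linarith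
  have secant : ∀ x : ℝ, r ≤ x → x ≤ R →
      f x ≤ ((R - x) * f r + (x - r) * f R) / (R - r) := by
    intro x hxr hxR
    have hne : R - r ≠ 0 := hden.ne'
    have ha : (0 : ℝ) ≤ (R - x) / (R - r) := div_nonneg (by linarith) hden.le
    have hb : (0 : ℝ) ≤ (x - r) / (R - r) := div_nonneg (by linarith) hden.le
    have hab : (R - x) / (R - r) + (x - r) / (R - r) = 1 := by
      field_simp
      ring
    have hcomb := hconv.2 (Set.mem_Ioi.2 hr) (Set.mem_Ioi.2 (by linarith : (0:ℝ) < R))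
      ha hb hab
    simp only [smul_eq_mul] at hcomb
    have hx : (R - x) / (R - r) * r + (x - r) / (R - r) * R = x := by
      field_simp
      ring
    rw [hx] at hcomb
    refine hcomb.trans_eq ?_
    field_simp
  have step : (∑ i, q i * f (p i / q i)) ≤
      ∑ i, ((R * q i - p i) * f r + (p i - r * q i) * f R) / (R - r) := by
    apply Finset.sum_le_sum
    intro i _
    have hqi := hq i
    have h1 := (hbound i).1
    have h2 := (hbound i).2
    have := mul_le_mul_of_nonneg_left (secant _ h1 h2) hqi.le
    refine this.trans_eq ?_
    field_simp
  refine step.trans_eq ?_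
  rw [← Finset.sum_div]
  congr 1
  rw [Finset.sum_add_distrib, ← Finset.sum_mul, ← Finset.sum_mul,
    Finset.sum_sub_distrib, Finset.sum_sub_distrib, ← Finset.mul_sum, ← Finset.mul_sum,
    hps, hqs]
  ring
end

section
/- Let f : (0,∞) → ℝ be differentiable and convex with f(1) = 0, and let 0 < r < 1 < R. Then the secant bound B(r,R) = [(R−1)f(r) + (1−r)f(R)]/(R−r) satisfies B(r,R) ≤ (1/4)(R−r)[f'(R) − f'(r)]. -/
/-!
Evaluating the tangent lines of `f` at `r` and at `R` at the point `1`, where `f` vanishes, gives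
`f r ≤ -f'(r) (1 - r)` and `f R ≤ f'(R) (R - 1)`. Hence the weighted sum in the numerator is at most
`(R - 1)(1 - r)(f'(R) - f'(r))`, and AM-GM bounds `(R - 1)(1 - r)` by `(R - r)² / 4`.
-/

namespace ConvexOn

variable {S : Set ℝ} {f : ℝ → ℝ} {x y r c R : ℝ}

theorem add_deriv_mul_sub_le_s11 (hfc : ConvexOn ℝ S f) (hx : x ∈ S) (hy : y ∈ S)
    (hfd : DifferentiableAt ℝ f x) : f x + deriv f x * (y - x) ≤ f y := by
  rcases lt_trichotomy x y with hxy | rfl | hyx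
  · have hslope := hfc.deriv_le_slope hx hy hxy hfd
    rw [slope_def_field, le_div_iff₀ (sub_pos.2 hxy)] at hslope
    linarith
  · simp
  · have hslope := hfc.slope_le_deriv hy hx hyx hfd
    rw [slope_def_field, div_le_iff₀ (sub_pos.2 hyx)] at hslope
    linarith

theorem secant_gap_le (hfc : ConvexOn ℝ S f) (hr : r ∈ S) (hc : c ∈ S) (hR : R ∈ S)
    (hrc : r ≤ c) (hcR : c ≤ R) (hfr : DifferentiableAt ℝ f r) (hfR : DifferentiableAt ℝ f R) :
    (R - c) * f r + (c - r) * f R - (R - r) * f c ≤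
      (R - c) * (c - r) * (deriv f R - deriv f r) := by
  have tangent_r := hfc.add_deriv_mul_sub_le_s11 hr hc hfr
  have tangent_R := hfc.add_deriv_mul_sub_le_s11 hR hc hfR
  linarith [mul_le_mul_of_nonneg_left tangent_r (sub_nonneg.2 hcR),
    mul_le_mul_of_nonneg_left tangent_R (sub_nonneg.2 hrc)]

end ConvexOn

theorem secant_le_gradient_bound (f : ℝ → ℝ)
    (hconv : ConvexOn ℝ (Set.Ioi (0 : ℝ)) f)
    (hdiff : ∀ x : ℝ, 0 < x → DifferentiableAt ℝ f x) (hf1 : f 1 = 0)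
    (r R : ℝ) (hr : 0 < r) (hr1 : r < 1) (h1R : 1 < R) :
    ((R - 1) * f r + (1 - r) * f R) / (R - r) ≤
      (1 / 4) * (R - r) * (deriv f R - deriv f r) := by
  have hR : 0 < R := one_pos.trans h1R
  have hrR : r < R := hr1.trans h1R
  have gap :=
    hconv.secant_gap_le hr (Set.mem_Ioi.2 one_pos) hR hr1.le h1R.le (hdiff r hr) (hdiff R hR)
  have mono : deriv f r ≤ deriv f R := hconv.monotoneOn_deriv hdiff hr hR hrR.le
  have amgm : 4 * (R - 1) * (1 - r) ≤ (R - r) ^ 2 := by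
    simpa using four_mul_le_sq_add (R - 1) (1 - r)
  rw [div_le_iff₀ (sub_pos.2 hrR)]
  calc (R - 1) * f r + (1 - r) * f R ≤ (R - 1) * (1 - r) * (deriv f R - deriv f r) := by
        simpa [hf1] using gap
    _ ≤ 1 / 4 * (R - r) * (deriv f R - deriv f r) * (R - r) := by
        linarith [mul_le_mul_of_nonneg_right amgm (sub_nonneg.2 mono)]
end

section
/- Let P, Q ∈ Γ_n with 0 < r ≤ p_i/q_i ≤ R for all i and 0 < r < 1 < R. Then the total variation V(P||Q) = ∑|p_i − q_i| satisfies V(P||Q) ≤ 2(R−1)(1−r)/(R−r) ≤ (R−r)/2. -/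
theorem total_variation_bounds (n : ℕ) (hn : 2 ≤ n) (p q : Fin n → ℝ)
    (hp : ∀ i, 0 < p i) (hq : ∀ i, 0 < q i)
    (hps : ∑ i, p i = 1) (hqs : ∑ i, q i = 1)
    (r R : ℝ) (hr : 0 < r) (hr1 : r < 1) (h1R : 1 < R)
    (hbound : ∀ i, r ≤ p i / q i ∧ p i / q i ≤ R) :
    (∑ i, |p i - q i|) ≤ 2 * (R - 1) * (1 - r) / (R - r) ∧
    2 * (R - 1) * (1 - r) / (R - r) ≤ (R - r) / 2 := by
  have hRr : 0 < R - r := by linarith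
  have hup : ∀ i, p i ≤ R * q i := fun i => by
    have := (hbound i).2
    rw [div_le_iff₀ (hq i)] at this
    linarith
  have hlo : ∀ i, r * q i ≤ p i := fun i => by
    have := (hbound i).1
    rw [le_div_iff₀ (hq i)] at this
    linarith
  set S := Finset.univ.filter (fun i => q i ≤ p i) with hS
  set T := ∑ i ∈ S, (p i - q i) with hT
  set A := ∑ i ∈ S, q i with hA
  have hzero : ∑ i ∈ S, (p i - q i) + ∑ i ∈ Sᶜ, (p i - q i) = 0 := by
    rw [Finset.sum_add_sum_compl]
    rw [Finset.sum_sub_distrib, hps, hqs]; ring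
  have hT2 : ∑ i ∈ Sᶜ, (q i - p i) = T := by
    have : ∑ i ∈ Sᶜ, (q i - p i) = -∑ i ∈ Sᶜ, (p i - q i) := by
      rw [← Finset.sum_neg_distrib]; apply Finset.sum_congr rfl; intros; ring
    rw [this]; linarith
  have hAc : ∑ i ∈ Sᶜ, q i = 1 - A := by
    have := Finset.sum_add_sum_compl S q
    rw [hqs] at this; linarith
  have hV : ∑ i, |p i - q i| = 2 * T := by
    rw [← Finset.sum_add_sum_compl S (fun i => |p i - q i|)]
    have h1 : ∑ i ∈ S, |p i - q i| = T := by
      apply Finset.sum_congr rfl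
      intro i hi
      rw [hS, Finset.mem_filter] at hi
      exact abs_of_nonneg (by linarith [hi.2])
    have h2 : ∑ i ∈ Sᶜ, |p i - q i| = T := by
      rw [← hT2]
      apply Finset.sum_congr rfl
      intro i hi
      rw [Finset.mem_compl, hS, Finset.mem_filter] at hi
      have : p i < q i := by
        by_contra h
        exact hi ⟨Finset.mem_univ i, by linarith⟩
      rw [abs_of_neg (by linarith)]; ring
    rw [h1, h2]; ring
  have hTup : T ≤ (R - 1) * A := by
    have : T ≤ ∑ i ∈ S, (R * q i - q i) := by
      apply Finset.sum_le_sum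
      intro i _
      linarith [hup i]
    calc T ≤ ∑ i ∈ S, (R * q i - q i) := this
      _ = (R - 1) * A := by rw [hA, Finset.mul_sum]
                            apply Finset.sum_congr rfl; intros; ring
  have hTlo : T ≤ (1 - r) * (1 - A) := by
    rw [← hT2, ← hAc]
    have : ∑ i ∈ Sᶜ, (q i - p i) ≤ ∑ i ∈ Sᶜ, (q i - r * q i) := by
      apply Finset.sum_le_sum
      intro i _
      linarith [hlo i]
    calc ∑ i ∈ Sᶜ, (q i - p i) ≤ ∑ i ∈ Sᶜ, (q i - r * q i) := this
      _ = (1 - r) * ∑ i ∈ Sᶜ, q i := by rw [Finset.mul_sum]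
                                        apply Finset.sum_congr rfl; intros; ring
  constructor
  · rw [hV, le_div_iff₀ hRr]
    nlinarith [mul_le_mul_of_nonneg_left hTup (by linarith : (0:ℝ) ≤ 1 - r),
      mul_le_mul_of_nonneg_left hTlo (by linarith : (0:ℝ) ≤ R - 1)]
  · rw [div_le_div_iff₀ hRr (by norm_num : (0:ℝ) < 2)]
    nlinarith [sq_nonneg ((R - 1) - (1 - r))]
end

section
/- For all probability distributions P, Q ∈ Γ_n, (1/2)Δ(P||Q) ≤ D(Q||P) ≤ χ²(Q||P), where Δ(P||Q) = ∑(p_i−q_i)²/(p_i+q_i), D(Q||P) = ∑(q_i−p_i)·ln((p_i+q_i)/(2p_i)), and χ²(Q||P) = ∑(q_i−p_i)²/p_i. -/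
/-!
The inequalities hold termwise. With `r = (p + q) / (2p)`, which exceeds `1/2` because `q > 0`,
the three summands are `2p` times `(r - 1)² / (2r)`, `(r - 1) log r` and `2 (r - 1)²`, and these
compare by `1 - 1/r ≤ log r ≤ r - 1`, the factors `1/2` and `2` absorbing `r` on `[1/2, 1]`.
-/

open Real

theorem sub_one_mul_log_bounds {r : ℝ} (hr : 1 / 2 ≤ r) :
    (r - 1) ^ 2 / (2 * r) ≤ (r - 1) * log r ∧ (r - 1) * log r ≤ 2 * (r - 1) ^ 2 := by
  have hr0 : 0 < r := by linarith
  have hlow := one_sub_inv_le_log_of_pos hr0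
  have hup := log_le_sub_one_of_pos hr0
  have hinv : 1 - r⁻¹ = (r - 1) / r := by field_simp
  rw [hinv, div_le_iff₀ hr0] at hlow
  rw [div_le_iff₀ (by positivity)]
  rcases le_total 1 r with h | h
  · constructor <;> nlinarith [mul_le_mul_of_nonneg_left hlow (sub_nonneg.2 h),
      mul_le_mul_of_nonneg_left hup (sub_nonneg.2 h)]
  · constructor <;> nlinarith [mul_le_mul_of_nonpos_left hlow (sub_nonpos.2 h),
      mul_le_mul_of_nonpos_left hup (sub_nonpos.2 h)]

theorem half_sq_div_add_le_sub_mul_log_and_le_sq_div {p q : ℝ} (hp : 0 < p) (hq : 0 < q) :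
    1 / 2 * ((p - q) ^ 2 / (p + q)) ≤ (q - p) * log ((p + q) / (2 * p)) ∧
      (q - p) * log ((p + q) / (2 * p)) ≤ (q - p) ^ 2 / p := by
  set r := (p + q) / (2 * p) with hr
  have hqp : q - p = 2 * p * (r - 1) := by rw [hr]; field_simp; ring
  have hpq : p + q = 2 * p * r := by rw [hr]; field_simp
  obtain ⟨hlow, hup⟩ := sub_one_mul_log_bounds (r := r) (by
    rw [hr, le_div_iff₀ (by positivity)]; linarith)
  have h2p : 0 ≤ 2 * p := by positivity
  constructor
  · calc 1 / 2 * ((p - q) ^ 2 / (p + q)) = 2 * p * ((r - 1) ^ 2 / (2 * r)) := by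
          rw [← neg_sub, neg_sq, hqp, hpq]; field_simp
      _ ≤ 2 * p * ((r - 1) * log r) := mul_le_mul_of_nonneg_left hlow h2p
      _ = (q - p) * log r := by rw [hqp]; ring
  · calc (q - p) * log r = 2 * p * ((r - 1) * log r) := by rw [hqp]; ring
      _ ≤ 2 * p * (2 * (r - 1) ^ 2) := mul_le_mul_of_nonneg_left hup h2p
      _ = (q - p) ^ 2 / p := by rw [hqp]; field_simp

theorem triangular_relJ_chisq_ineq_general (n : ℕ) (p q : Fin n → ℝ)
    (hp : ∀ i, 0 < p i) (hq : ∀ i, 0 < q i) :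
    (1 / 2) * (∑ i, (p i - q i) ^ 2 / (p i + q i)) ≤
      (∑ i, (q i - p i) * Real.log ((p i + q i) / (2 * p i))) ∧
    (∑ i, (q i - p i) * Real.log ((p i + q i) / (2 * p i))) ≤
      ∑ i, (q i - p i) ^ 2 / p i := by
  have termwise i := half_sq_div_add_le_sub_mul_log_and_le_sq_div (hp i) (hq i)
  constructor
  · rw [Finset.mul_sum]
    exact Finset.sum_le_sum fun i _ => (termwise i).1
  · exact Finset.sum_le_sum fun i _ => (termwise i).2

theorem triangular_relJ_chisq_ineq (n : ℕ) (hn : 2 ≤ n) (p q : Fin n → ℝ)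
    (hp : ∀ i, 0 < p i) (hq : ∀ i, 0 < q i)
    (hps : ∑ i, p i = 1) (hqs : ∑ i, q i = 1) :
    (1 / 2) * (∑ i, (p i - q i) ^ 2 / (p i + q i)) ≤
      (∑ i, (q i - p i) * Real.log ((p i + q i) / (2 * p i))) ∧
    (∑ i, (q i - p i) * Real.log ((p i + q i) / (2 * p i))) ≤
      ∑ i, (q i - p i) ^ 2 / p i :=
  triangular_relJ_chisq_ineq_general n p q hp hq
end

section
/- Let P, Q ∈ Γ_n with 0 < r ≤ p_i/q_i ≤ R for all i and 0 < r < 1 < R. Then the relative Jensen–Shannon divergence satisfies F(P||Q) := ∑ p_i·ln(2p_i/(p_i+q_i)) ≤ D(Q||P) − (1/2)Δ(P||Q), where D(Q||P) = ∑(q_i−p_i)·ln((p_i+q_i)/(2p_i)) and Δ(P||Q) = ∑(p_i−q_i)²/(p_i+q_i). -/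
/-!
Adding the term `(pᵢ - qᵢ)/2`, which sums to zero, the inequality holds termwise: moving
`(qᵢ - pᵢ) log ((pᵢ + qᵢ)/(2pᵢ)) = -(qᵢ - pᵢ) log (2pᵢ/(pᵢ + qᵢ))` to the left leaves
`qᵢ log x ≤ qᵢ (x - 1)` for `x = 2pᵢ/(pᵢ + qᵢ)`, i.e. `log x ≤ x - 1`, because
`qᵢ (x - 1) = qᵢ (pᵢ - qᵢ)/(pᵢ + qᵢ) = (pᵢ - qᵢ)/2 - (pᵢ - qᵢ)²/(2(pᵢ + qᵢ))`.
-/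

open Finset Real

lemma mul_log_two_mul_div_add_le {p q : ℝ} (hp : 0 < p) (hq : 0 < q) :
    q * log (2 * p / (p + q)) ≤ (p - q) / 2 - (1 / 2) * ((p - q) ^ 2 / (p + q)) := by
  have hpq : 0 < p + q := by linarith
  calc q * log (2 * p / (p + q)) ≤ q * (2 * p / (p + q) - 1) :=
        mul_le_mul_of_nonneg_left (log_le_sub_one_of_pos (by positivity)) hq.le
    _ = (p - q) / 2 - (1 / 2) * ((p - q) ^ 2 / (p + q)) := by
        field_simp
        ring

lemma mul_log_two_mul_div_add_le_relJS_term {p q : ℝ} (hp : 0 < p) (hq : 0 < q) :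
    p * log (2 * p / (p + q)) ≤
      (q - p) * log ((p + q) / (2 * p)) - (1 / 2) * ((p - q) ^ 2 / (p + q)) + (p - q) / 2 := by
  have hinv : log ((p + q) / (2 * p)) = -log (2 * p / (p + q)) := by
    rw [← log_inv, inv_div]
  rw [hinv]
  linarith [mul_log_two_mul_div_add_le hp hq]

theorem sum_mul_log_two_mul_div_add_le {ι : Type*} (s : Finset ι) {p q : ι → ℝ}
    (hp : ∀ i ∈ s, 0 < p i) (hq : ∀ i ∈ s, 0 < q i) (hsum : ∑ i ∈ s, p i = ∑ i ∈ s, q i) :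
    ∑ i ∈ s, p i * log (2 * p i / (p i + q i)) ≤
      ∑ i ∈ s, (q i - p i) * log ((p i + q i) / (2 * p i)) -
        (1 / 2) * ∑ i ∈ s, (p i - q i) ^ 2 / (p i + q i) := by
  calc ∑ i ∈ s, p i * log (2 * p i / (p i + q i))
      ≤ ∑ i ∈ s, ((q i - p i) * log ((p i + q i) / (2 * p i)) -
          (1 / 2) * ((p i - q i) ^ 2 / (p i + q i)) + (p i - q i) / 2) :=
        sum_le_sum fun i hi => mul_log_two_mul_div_add_le_relJS_term (hp i hi) (hq i hi)
    _ = ∑ i ∈ s, (q i - p i) * log ((p i + q i) / (2 * p i)) -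
          (1 / 2) * ∑ i ∈ s, (p i - q i) ^ 2 / (p i + q i) +
          (∑ i ∈ s, p i - ∑ i ∈ s, q i) / 2 := by
        rw [sum_add_distrib, sum_sub_distrib, mul_sum, ← sum_div, sum_sub_distrib]
    _ = ∑ i ∈ s, (q i - p i) * log ((p i + q i) / (2 * p i)) -
          (1 / 2) * ∑ i ∈ s, (p i - q i) ^ 2 / (p i + q i) := by
        rw [hsum, sub_self, zero_div, add_zero]

theorem relJS_upper_bound_general (n : ℕ) (p q : Fin n → ℝ)
    (hp : ∀ i, 0 < p i) (hq : ∀ i, 0 < q i)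
    (hps : ∑ i, p i = 1) (hqs : ∑ i, q i = 1) :
    (∑ i, p i * Real.log (2 * p i / (p i + q i))) ≤
      (∑ i, (q i - p i) * Real.log ((p i + q i) / (2 * p i))) -
        (1 / 2) * ∑ i, (p i - q i) ^ 2 / (p i + q i) :=
  sum_mul_log_two_mul_div_add_le univ (fun i _ => hp i) (fun i _ => hq i) (hps.trans hqs.symm)

theorem relJS_upper_bound (n : ℕ) (hn : 2 ≤ n) (p q : Fin n → ℝ)
    (hp : ∀ i, 0 < p i) (hq : ∀ i, 0 < q i)
    (hps : ∑ i, p i = 1) (hqs : ∑ i, q i = 1)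
    (r R : ℝ) (hr : 0 < r) (hr1 : r < 1) (h1R : 1 < R)
    (hbound : ∀ i, r ≤ p i / q i ∧ p i / q i ≤ R) :
    (∑ i, p i * Real.log (2 * p i / (p i + q i))) ≤
      (∑ i, (q i - p i) * Real.log ((p i + q i) / (2 * p i))) -
        (1 / 2) * ∑ i, (p i - q i) ^ 2 / (p i + q i) :=
  relJS_upper_bound_general n p q hp hq hps hqs
end

section
/- For all probability distributions P, Q ∈ Γ_n, the relative arithmetic–geometric divergence satisfies G(P||Q) := ∑((p_i+q_i)/2)·ln((p_i+q_i)/(2p_i)) ≤ (1/2)[χ²(Q||P) − D(Q||P)], where χ²(Q||P) = ∑(q_i−p_i)²/p_i and D(Q||P) = ∑(q_i−p_i)·ln((p_i+q_i)/(2p_i)). -/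
/-!
Write `r_i = (p_i + q_i) / (2 p_i)`. Then `G(P‖Q) + D(Q‖P) / 2 = ∑ q_i ln r_i`, and `ln r ≤ r - 1`
bounds each term by `q_i (q_i - p_i) / (2 p_i) = ((q_i - p_i)² / p_i + (q_i - p_i)) / 2`;
the linear terms sum to `0` because both distributions have total mass `1`.
-/

open Finset Real

lemma mul_log_add_div_le (p q : ℝ) (hp : 0 < p) (hq : 0 ≤ q) :
    q * log ((p + q) / (2 * p)) ≤ ((q - p) ^ 2 / p + (q - p)) / 2 := by
  have hlog : log ((p + q) / (2 * p)) ≤ (p + q) / (2 * p) - 1 :=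
    log_le_sub_one_of_pos (by positivity)
  calc q * log ((p + q) / (2 * p)) ≤ q * ((p + q) / (2 * p) - 1) :=
        mul_le_mul_of_nonneg_left hlog hq
    _ = ((q - p) ^ 2 / p + (q - p)) / 2 := by field_simp; ring

lemma sum_mul_log_add_div_le_chiSq {ι : Type*} [Fintype ι] (p q : ι → ℝ)
    (hp : ∀ i, 0 < p i) (hq : ∀ i, 0 ≤ q i) (hpq : ∑ i, p i = ∑ i, q i) :
    ∑ i, q i * log ((p i + q i) / (2 * p i)) ≤ (∑ i, (q i - p i) ^ 2 / p i) / 2 := by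
  have hlin : ∑ i, (q i - p i) = 0 := by rw [sum_sub_distrib, hpq, sub_self]
  calc ∑ i, q i * log ((p i + q i) / (2 * p i))
      ≤ ∑ i, ((q i - p i) ^ 2 / p i + (q i - p i)) / 2 :=
        sum_le_sum fun i _ => mul_log_add_div_le (p i) (q i) (hp i) (hq i)
    _ = (∑ i, (q i - p i) ^ 2 / p i) / 2 := by
        rw [← sum_div, sum_add_distrib, hlin, add_zero]

theorem relAG_upper_bound_general (n : ℕ) (p q : Fin n → ℝ)
    (hp : ∀ i, 0 < p i) (hq : ∀ i, 0 < q i)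
    (hps : ∑ i, p i = 1) (hqs : ∑ i, q i = 1) :
    (∑ i, ((p i + q i) / 2) * Real.log ((p i + q i) / (2 * p i))) ≤
      (1 / 2) * ((∑ i, (q i - p i) ^ 2 / p i) -
        ∑ i, (q i - p i) * Real.log ((p i + q i) / (2 * p i))) := by
  have hsplit : ∑ i, ((p i + q i) / 2) * log ((p i + q i) / (2 * p i)) +
      (1 / 2) * ∑ i, (q i - p i) * log ((p i + q i) / (2 * p i)) =
      ∑ i, q i * log ((p i + q i) / (2 * p i)) := by
    rw [mul_sum, ← sum_add_distrib]
    exact sum_congr rfl fun i _ => by ring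
  have hbound := sum_mul_log_add_div_le_chiSq p q hp (fun i => (hq i).le) (hps.trans hqs.symm)
  linarith

theorem relAG_upper_bound (n : ℕ) (hn : 2 ≤ n) (p q : Fin n → ℝ)
    (hp : ∀ i, 0 < p i) (hq : ∀ i, 0 < q i)
    (hps : ∑ i, p i = 1) (hqs : ∑ i, q i = 1) :
    (∑ i, ((p i + q i) / 2) * Real.log ((p i + q i) / (2 * p i))) ≤
      (1 / 2) * ((∑ i, (q i - p i) ^ 2 / p i) -
        ∑ i, (q i - p i) * Real.log ((p i + q i) / (2 * p i))) :=
  relAG_upper_bound_general n p q hp hq hps hqs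
end

section
/- Let P, Q ∈ Γ_n with 0 < r ≤ p_i/q_i ≤ R for all i and 0 < r < 1 < R. Then the triangular discrimination satisfies Δ(P||Q) = ∑(p_i−q_i)²/(p_i+q_i) ≤ 2(R−1)(1−r)/((R+1)(r+1)) ≤ (R−r)²(R+r+2)/((R+1)²(r+1)²). -/
/-!
Writing `(p - q)² / (p + q) = p - 3q + 4q² / (p + q)`, the only non-linear part of the summand
is `4q · (p/q + 1)⁻¹`. Since `x ↦ x⁻¹` is convex, on `[r + 1, R + 1]` it lies below its chord,
which bounds each summand by a linear form in `p i, q i`; summing with `∑ p = ∑ q = 1` gives the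
first bound. The second is elementary: AM-GM gives `4(R - 1)(1 - r) ≤ (R - r)²`.
-/

open Finset

noncomputable def triangularDiscrimination {ι : Type*} [Fintype ι] (p q : ι → ℝ) : ℝ :=
  ∑ i, (p i - q i) ^ 2 / (p i + q i)

theorem inv_le_add_sub_div_mul {a b x : ℝ} (hb : 0 < b) (hbx : b ≤ x) (hxa : x ≤ a) :
    x⁻¹ ≤ (a + b - x) / (a * b) := by
  have hx : 0 < x := hb.trans_le hbx
  rw [inv_eq_one_div, div_le_div_iff₀ hx (by nlinarith)]
  nlinarith [mul_nonneg (sub_nonneg.2 hbx) (sub_nonneg.2 hxa)]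

theorem sq_sub_div_add_le {p q r R : ℝ} (hq : 0 < q) (hr : -1 < r)
    (hrp : r ≤ p / q) (hpR : p / q ≤ R) :
    (p - q) ^ 2 / (p + q) ≤ p - 3 * q + 4 * ((R + r + 1) * q - p) / ((R + 1) * (r + 1)) := by
  have hpq : 0 < p + q := by
    have := mul_pos hq (by linarith : 0 < p / q + 1)
    rwa [mul_add, mul_div_cancel₀ _ hq.ne', mul_one] at this
  have hchord := inv_le_add_sub_div_mul (by linarith : 0 < r + 1)
    (by linarith : r + 1 ≤ p / q + 1) (by linarith : p / q + 1 ≤ R + 1)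
  calc (p - q) ^ 2 / (p + q) = p - 3 * q + 4 * q * (p / q + 1)⁻¹ := by
        field_simp
        ring
    _ ≤ p - 3 * q + 4 * q * ((R + 1 + (r + 1) - (p / q + 1)) / ((R + 1) * (r + 1))) := by
        gcongr
    _ = p - 3 * q + 4 * ((R + r + 1) * q - p) / ((R + 1) * (r + 1)) := by
        field_simp; ring

theorem triangularDiscrimination_le {ι : Type*} [Fintype ι] {p q : ι → ℝ} {r R : ℝ}
    (hq : ∀ i, 0 < q i) (hps : ∑ i, p i = 1) (hqs : ∑ i, q i = 1) (hr : -1 < r) (hR : -1 < R)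
    (hbound : ∀ i, r ≤ p i / q i ∧ p i / q i ≤ R) :
    triangularDiscrimination p q ≤ 2 * (R - 1) * (1 - r) / ((R + 1) * (r + 1)) := by
  have hR1 : R + 1 ≠ 0 := by linarith
  have hr1 : r + 1 ≠ 0 := by linarith
  calc triangularDiscrimination p q
      ≤ ∑ i, (p i - 3 * q i + 4 * ((R + r + 1) * q i - p i) / ((R + 1) * (r + 1))) :=
        sum_le_sum fun i _ => sq_sub_div_add_le (hq i) hr (hbound i).1 (hbound i).2
    _ = ∑ i, p i - 3 * ∑ i, q i
          + 4 * ((R + r + 1) * ∑ i, q i - ∑ i, p i) / ((R + 1) * (r + 1)) := by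
        simp only [sum_add_distrib, sum_sub_distrib, ← sum_div, ← mul_sum]
    _ = 2 * (R - 1) * (1 - r) / ((R + 1) * (r + 1)) := by
        rw [hps, hqs]; field_simp; ring

theorem two_mul_sub_one_mul_one_sub_div_le {r R : ℝ} (hr : -1 < r) (hR : -1 < R) :
    2 * (R - 1) * (1 - r) / ((R + 1) * (r + 1)) ≤
      (R - r) ^ 2 * (R + r + 2) / ((R + 1) ^ 2 * (r + 1) ^ 2) := by
  have hR0 : 0 < R + 1 := by linarith
  have hr0 : 0 < r + 1 := by linarith
  rw [div_le_div_iff₀ (by positivity) (by positivity)]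
  suffices h : 2 * (R - 1) * (1 - r) * ((R + 1) * (r + 1)) ≤ (R - r) ^ 2 * (R + r + 2) by
    nlinarith [mul_le_mul_of_nonneg_right h (mul_pos hR0 hr0).le]
  rcases le_or_gt ((R - 1) * (1 - r)) 0 with hneg | hpos
  · nlinarith [mul_pos hR0 hr0, mul_nonneg (sq_nonneg (R - r)) (add_pos hR0 hr0).le]
  · have hamgm : 4 * ((R - 1) * (1 - r)) ≤ (R - r) ^ 2 := by nlinarith [sq_nonneg (R + r - 2)]
    -- equivalent to `(R - 1)(r - 1) ≤ 4`, and here `(R - 1)(r - 1) < 0`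
    have hprod : (R + 1) * (r + 1) ≤ 2 * (R + r + 2) := by nlinarith
    nlinarith [mul_le_mul hamgm hprod (mul_pos hR0 hr0).le (sq_nonneg (R - r))]

theorem triangular_bounds_general (n : ℕ) (p q : Fin n → ℝ)
    (hq : ∀ i, 0 < q i)
    (hps : ∑ i, p i = 1) (hqs : ∑ i, q i = 1)
    (r R : ℝ) (hr : 0 < r) (h1R : 1 < R)
    (hbound : ∀ i, r ≤ p i / q i ∧ p i / q i ≤ R) :
    (∑ i, (p i - q i) ^ 2 / (p i + q i)) ≤
      2 * (R - 1) * (1 - r) / ((R + 1) * (r + 1)) ∧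
    2 * (R - 1) * (1 - r) / ((R + 1) * (r + 1)) ≤
      (R - r) ^ 2 * (R + r + 2) / ((R + 1) ^ 2 * (r + 1) ^ 2) :=
  ⟨triangularDiscrimination_le hq hps hqs (by linarith) (by linarith) hbound,
    two_mul_sub_one_mul_one_sub_div_le (by linarith) (by linarith)⟩

theorem triangular_bounds (n : ℕ) (hn : 2 ≤ n) (p q : Fin n → ℝ)
    (hp : ∀ i, 0 < p i) (hq : ∀ i, 0 < q i)
    (hps : ∑ i, p i = 1) (hqs : ∑ i, q i = 1)
    (r R : ℝ) (hr : 0 < r) (hr1 : r < 1) (h1R : 1 < R)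
    (hbound : ∀ i, r ≤ p i / q i ∧ p i / q i ≤ R) :
    (∑ i, (p i - q i) ^ 2 / (p i + q i)) ≤
      2 * (R - 1) * (1 - r) / ((R + 1) * (r + 1)) ∧
    2 * (R - 1) * (1 - r) / ((R + 1) * (r + 1)) ≤
      (R - r) ^ 2 * (R + r + 2) / ((R + 1) ^ 2 * (r + 1) ^ 2) :=
  triangular_bounds_general n p q hq hps hqs r R hr h1R hbound
end

section
/- Let P, Q ∈ Γ_n with 0 < r ≤ p_i/q_i ≤ R for all i and 0 < r < 1 < R. Then χ²(Q||P) = ∑(q_i−p_i)²/p_i ≤ (R−1)(1−r)/(rR) ≤ (R−r)²(R+r)/(4r²R²). -/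
/-!
Since `∑ pᵢ = ∑ qᵢ = 1`, we have `χ²(Q‖P) = ∑ qᵢ² / pᵢ - 1`. The ratio bounds `r qᵢ ≤ pᵢ ≤ R qᵢ`
give `(pᵢ - r qᵢ)(R qᵢ - pᵢ) ≥ 0`, i.e. `qᵢ² / pᵢ ≤ ((R + r) qᵢ - pᵢ) / (r R)`; summing yields
`∑ qᵢ² / pᵢ ≤ (R + r - 1) / (r R)`, which is the first bound. The second follows from
`4 (R - 1)(1 - r) ≤ (R - r)²` (AM-GM) and `r R ≤ R + r`.
-/

open Finset

lemma sq_div_le_of_mul_le_of_le_mul {p q r R : ℝ} (hp : 0 < p) (hr : 0 < r) (hR : 0 < R)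
    (hlo : r * q ≤ p) (hhi : p ≤ R * q) :
    q ^ 2 / p ≤ ((R + r) * q - p) / (r * R) := by
  rw [div_le_div_iff₀ hp (mul_pos hr hR)]
  nlinarith [mul_nonneg (sub_nonneg.mpr hlo) (sub_nonneg.mpr hhi)]

section

variable {ι : Type*} [Fintype ι] {p q : ι → ℝ}

lemma sum_sq_sub_div_eq_sum_sq_div_sub_one (hp : ∀ i, 0 < p i)
    (hps : ∑ i, p i = 1) (hqs : ∑ i, q i = 1) :
    ∑ i, (q i - p i) ^ 2 / p i = ∑ i, q i ^ 2 / p i - 1 := by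
  have hterm : ∀ i, (q i - p i) ^ 2 / p i = q i ^ 2 / p i - 2 * q i + p i := fun i => by
    field_simp [(hp i).ne']
    ring
  simp only [hterm, sum_add_distrib, sum_sub_distrib, ← mul_sum, hps, hqs]
  ring

lemma sum_sq_div_le_of_ratio_bounds {r R : ℝ} (hp : ∀ i, 0 < p i) (hq : ∀ i, 0 < q i)
    (hps : ∑ i, p i = 1) (hqs : ∑ i, q i = 1) (hr : 0 < r) (hR : 0 < R)
    (hbound : ∀ i, r ≤ p i / q i ∧ p i / q i ≤ R) :
    ∑ i, q i ^ 2 / p i ≤ (R + r - 1) / (r * R) :=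
  calc ∑ i, q i ^ 2 / p i
      ≤ ∑ i, ((R + r) * q i - p i) / (r * R) := sum_le_sum fun i _ =>
        sq_div_le_of_mul_le_of_le_mul (hp i) hr hR ((le_div_iff₀ (hq i)).mp (hbound i).1)
          ((div_le_iff₀ (hq i)).mp (hbound i).2)
    _ = (R + r - 1) / (r * R) := by
        rw [← sum_div, sum_sub_distrib, ← mul_sum, hps, hqs, mul_one]

end

lemma sub_one_mul_one_sub_div_le {r R : ℝ} (hr : 0 < r) (hr1 : r < 1) (hR : 0 < R) :
    (R - 1) * (1 - r) / (r * R) ≤ (R - r) ^ 2 * (R + r) / (4 * r ^ 2 * R ^ 2) := by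
  have hamgm : 4 * ((R - 1) * (1 - r)) ≤ (R - r) ^ 2 := by
    simpa [mul_assoc] using four_mul_le_sq_add (R - 1) (1 - r)
  have hprod : r * R ≤ R + r := by nlinarith
  rw [div_le_div_iff₀ (mul_pos hr hR) (by positivity)]
  nlinarith [mul_le_mul_of_nonneg_right hamgm (by positivity : 0 ≤ r ^ 2 * R ^ 2),
    mul_le_mul_of_nonneg_left hprod (by positivity : 0 ≤ (R - r) ^ 2 * (r * R))]

theorem chisq_QP_bounds_general (n : ℕ) (p q : Fin n → ℝ)
    (hp : ∀ i, 0 < p i) (hq : ∀ i, 0 < q i)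
    (hps : ∑ i, p i = 1) (hqs : ∑ i, q i = 1)
    (r R : ℝ) (hr : 0 < r) (hr1 : r < 1) (h1R : 1 < R)
    (hbound : ∀ i, r ≤ p i / q i ∧ p i / q i ≤ R) :
    (∑ i, (q i - p i) ^ 2 / p i) ≤ (R - 1) * (1 - r) / (r * R) ∧
    (R - 1) * (1 - r) / (r * R) ≤ (R - r) ^ 2 * (R + r) / (4 * r ^ 2 * R ^ 2) := by
  have hR : 0 < R := by linarith
  refine ⟨?_, sub_one_mul_one_sub_div_le hr hr1 hR⟩
  calc ∑ i, (q i - p i) ^ 2 / p i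
      = ∑ i, q i ^ 2 / p i - 1 := sum_sq_sub_div_eq_sum_sq_div_sub_one hp hps hqs
    _ ≤ (R + r - 1) / (r * R) - 1 := by
        gcongr
        exact sum_sq_div_le_of_ratio_bounds hp hq hps hqs hr hR hbound
    _ = (R - 1) * (1 - r) / (r * R) := by
        field_simp
        ring

theorem chisq_QP_bounds (n : ℕ) (hn : 2 ≤ n) (p q : Fin n → ℝ)
    (hp : ∀ i, 0 < p i) (hq : ∀ i, 0 < q i)
    (hps : ∑ i, p i = 1) (hqs : ∑ i, q i = 1)
    (r R : ℝ) (hr : 0 < r) (hr1 : r < 1) (h1R : 1 < R)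
    (hbound : ∀ i, r ≤ p i / q i ∧ p i / q i ≤ R) :
    (∑ i, (q i - p i) ^ 2 / p i) ≤ (R - 1) * (1 - r) / (r * R) ∧
    (R - 1) * (1 - r) / (r * R) ≤ (R - r) ^ 2 * (R + r) / (4 * r ^ 2 * R ^ 2) :=
  chisq_QP_bounds_general n p q hp hq hps hqs r R hr hr1 h1R hbound
end
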